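/- If f(z) = z + ∑_{n≥2} a_n z^n is analytic on 𝔻 with f(z) ≠ 0 for z ≠ 0, and |(z/f(z))²f'(z) − μ| < λ on 𝔻 where λ > 0 and |1−μ| < λ, then |a₂² − a₃| ≤ λ(1 − |1−μ|²/λ²). -/

import Mathlib

/-!
Write `f z = z * F₁ z` and `F₁ z = 1 + z * F₂ z` with `F₁ = dslope f 0`, `F₂ = dslope F₁ 0`, so
that `F₂ 0 = a₂` and `F₂' 0 = a₃`. Then `(z / f z)² f' z = f' z / F₁ z² = 1 + z² h z` with
`h = (F₂' - F₂²) / F₁²`, `h 0 = a₃ - a₂²`. Hence `w = ((z / f)² f' - μ) / λ` is a holomorphic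
self-map of the disc with `w z = c + z² h z / λ`, `c = (1 - μ) / λ`. Composing with the disc
automorphism `(w - c) / (1 - c̄ w)` gives a self-map with a double zero at `0`; the Schwarz lemma,
applied twice, bounds its second coefficient `h 0 / (λ (1 - |c|²))` by `1`.
-/

open Metric Complex Set Function ComplexConjugate
open scoped NNReal

theorem hasFPowerSeriesOnBall_ofScalars_of_hasSum {f : ℂ → ℂ} {a : ℕ → ℂ} {r : ℝ≥0}
    (hr : 0 < r) (hf : ∀ z ∈ ball (0 : ℂ) r, HasSum (fun n => a n * z ^ n) (f z)) :
    HasFPowerSeriesOnBall f (FormalMultilinearSeries.ofScalars ℂ a) 0 r where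
  r_le := by
    refine ENNReal.le_of_forall_nnreal_lt fun s hs => ?_
    have hs : ((s : ℝ) : ℂ) ∈ ball (0 : ℂ) r := by simpa using hs
    refine FormalMultilinearSeries.le_radius_of_tendsto _ (l := 0) ?_
    simpa [FormalMultilinearSeries.ofScalars_norm] using
      (hf _ hs).summable.tendsto_atTop_zero.norm
  r_pos := by simpa using hr
  hasSum {y} hy := by
    simpa [FormalMultilinearSeries.ofScalars_apply_eq, mul_comm] using hf y (by simpa using hy)

theorem HasFPowerSeriesAt.iterate_dslope_apply_self {𝕜 E : Type*} [NontriviallyNormedField 𝕜]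
    [NormedAddCommGroup E] [NormedSpace 𝕜 E] {p : FormalMultilinearSeries 𝕜 𝕜 E} {f : 𝕜 → E}
    {z₀ : 𝕜} (hp : HasFPowerSeriesAt f p z₀) (n : ℕ) :
    (swap dslope z₀)^[n] f z₀ = p.coeff n := by
  rw [← (hp.has_fpower_series_iterate_dslope_fslope n).coeff_zero 1,
    ← FormalMultilinearSeries.coeff, FormalMultilinearSeries.coeff_iterate_fslope, zero_add]

theorem deriv_eq_dslope_add_sub_mul_deriv_dslope {𝕜 : Type*} [NontriviallyNormedField 𝕜]
    {f : 𝕜 → 𝕜} {a z : 𝕜} (hd : DifferentiableAt 𝕜 (dslope f a) z) :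
    deriv f z = dslope f a z + (z - a) * deriv (dslope f a) z := by
  have hf : f = fun w => f a + (w - a) * dslope f a w := by
    funext w; rw [← smul_eq_mul, sub_smul_dslope, add_sub_cancel]
  have h := (((hasDerivAt_id' z).sub_const a).fun_mul hd.hasDerivAt).const_add (f a)
  rw [← hf, one_mul] at h
  exact h.deriv

theorem dslope_sub_mul {𝕜 : Type*} [NontriviallyNormedField 𝕜] {k : 𝕜 → 𝕜} {a : 𝕜}
    (hk : DifferentiableAt 𝕜 k a) : dslope (fun z => (z - a) * k z) a = k := by
  funext z
  rcases eq_or_ne z a with rfl | hz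
  · simpa using (((hasDerivAt_id z).sub_const z).fun_mul hk.hasDerivAt).deriv
  · simpa using dslope_sub_smul_of_ne k hz

theorem one_sub_conj_mul_ne_zero {c w : ℂ} (hc : ‖c‖ < 1) (hw : ‖w‖ ≤ 1) :
    1 - conj c * w ≠ 0 := by
  refine sub_ne_zero.mpr fun h => ?_
  have : ‖conj c * w‖ < 1 := by
    rw [norm_mul, RCLike.norm_conj]
    exact lt_of_le_of_lt (mul_le_of_le_one_right (norm_nonneg c) hw) hc
  simp [← h] at this

theorem norm_sub_div_one_sub_conj_mul_lt_one {c w : ℂ} (hc : ‖c‖ < 1) (hw : ‖w‖ < 1) :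
    ‖(w - c) / (1 - conj c * w)‖ < 1 := by
  have hD : 0 < ‖1 - conj c * w‖ := norm_pos_iff.mpr (one_sub_conj_mul_ne_zero hc hw.le)
  have key : normSq (1 - conj c * w) - normSq (w - c) = (1 - normSq c) * (1 - normSq w) := by
    simp only [normSq_apply, sub_re, sub_im, mul_re, mul_im, conj_re, conj_im, one_re, one_im]
    ring
  rw [norm_div, div_lt_one hD]
  refine lt_of_pow_lt_pow_left₀ 2 hD.le ?_
  rw [Complex.sq_norm, Complex.sq_norm]
  have hc2 : normSq c < 1 := by rw [← Complex.sq_norm]; nlinarith [norm_nonneg c]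
  have hw2 : normSq w < 1 := by rw [← Complex.sq_norm]; nlinarith [norm_nonneg w]
  nlinarith

theorem norm_le_div_sq_of_mapsTo_ball_sq_mul {k : ℂ → ℂ} {R M : ℝ} {z : ℂ}
    (hk : DifferentiableOn ℂ k (ball 0 R))
    (hmaps : MapsTo (fun w => w ^ 2 * k w) (ball 0 R) (closedBall 0 M)) (hz : z ∈ ball 0 R) :
    ‖k z‖ ≤ M / R ^ 2 := by
  have h0 : ball (0 : ℂ) R ∈ nhds 0 := isOpen_ball.mem_nhds (mem_ball_self (pos_of_mem_ball hz))
  have hk₁ : DifferentiableOn ℂ (fun w => w * k w) (ball 0 R) := differentiableOn_id.mul hk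
  have hk₂ : DifferentiableOn ℂ (fun w => w ^ 2 * k w) (ball 0 R) := by fun_prop
  have hdslope₁ : dslope (fun w => w ^ 2 * k w) 0 = fun w => w * k w := by
    simpa [← mul_assoc, ← sq] using dslope_sub_mul (hk₁.differentiableAt h0)
  have hdslope₂ : dslope (fun w => w * k w) 0 = k := by
    simpa using dslope_sub_mul (hk.differentiableAt h0)
  have hmaps₁ : MapsTo (fun w => w * k w) (ball 0 R) (closedBall 0 (M / R)) := fun w hw => by
    have := norm_dslope_le_div_of_mapsTo_ball hk₂ (by simpa using hmaps) hw
    simpa [hdslope₁] using this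
  have := norm_dslope_le_div_of_mapsTo_ball hk₁ (by simpa using hmaps₁) hz
  rwa [hdslope₂, div_div, ← sq] at this

theorem norm_le_one_sub_sq_of_mapsTo_ball {c : ℂ} {h : ℂ → ℂ}
    (hh : DifferentiableOn ℂ h (ball 0 1))
    (hmaps : MapsTo (fun z => c + z ^ 2 * h z) (ball 0 1) (ball 0 1)) :
    ‖h 0‖ ≤ 1 - ‖c‖ ^ 2 := by
  have h0 : (0 : ℂ) ∈ ball 0 1 := mem_ball_self one_pos
  have hc : ‖c‖ < 1 := by simpa using hmaps h0
  have hD : ∀ z ∈ ball (0 : ℂ) 1, 1 - conj c * (c + z ^ 2 * h z) ≠ 0 := fun z hz =>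
    one_sub_conj_mul_ne_zero hc (mem_ball_zero_iff.mp (hmaps hz)).le
  set k := fun z => h z / (1 - conj c * (c + z ^ 2 * h z))
  have hk : DifferentiableOn ℂ k (ball 0 1) := by fun_prop (disch := assumption)
  have hmaps' : MapsTo (fun z => z ^ 2 * k z) (ball 0 1) (closedBall 0 1) := fun z hz => by
    have := norm_sub_div_one_sub_conj_mul_lt_one hc (mem_ball_zero_iff.mp (hmaps hz))
    rw [mem_closedBall_zero_iff]
    simpa [k, mul_div_assoc] using this.le
  have hk0 := norm_le_div_sq_of_mapsTo_ball_sq_mul hk hmaps' h0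
  have hc2 : 0 < 1 - ‖c‖ ^ 2 := by nlinarith [norm_nonneg c]
  rw [one_pow, div_one] at hk0
  simp only [k, zero_pow two_ne_zero, zero_mul, add_zero, Complex.conj_mul', norm_div] at hk0
  rwa [← ofReal_pow, ← ofReal_one, ← ofReal_sub, norm_real, Real.norm_of_nonneg hc2.le,
    div_le_one hc2] at hk0

theorem norm_le_mul_one_sub_of_mapsTo_ball {c μ : ℂ} {r : ℝ} {h : ℂ → ℂ}
    (hh : DifferentiableOn ℂ h (ball 0 1))
    (hmaps : MapsTo (fun z => c + z ^ 2 * h z) (ball 0 1) (ball μ r)) :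
    ‖h 0‖ ≤ r * (1 - ‖c - μ‖ ^ 2 / r ^ 2) := by
  have hr : 0 < r := pos_of_mem_ball (hmaps (mem_ball_self one_pos))
  have hr' : ‖(r : ℂ)‖ = r := by rw [norm_real, Real.norm_of_nonneg hr.le]
  have hmaps' : MapsTo (fun z => (c - μ) / r + z ^ 2 * (h z / r)) (ball 0 1) (ball 0 1) :=
    fun z hz => by
      have : ‖c + z ^ 2 * h z - μ‖ < r := by simpa [dist_eq_norm] using hmaps hz
      rw [← div_lt_one hr, ← hr', ← norm_div] at this
      simp only [mem_ball_zero_iff]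
      rwa [show (c - μ) / r + z ^ 2 * (h z / r) = (c + z ^ 2 * h z - μ) / r by ring]
  have := norm_le_one_sub_sq_of_mapsTo_ball (hh.div_const (r : ℂ)) hmaps'
  rw [norm_div, norm_div, hr', div_pow, div_le_iff₀ hr] at this
  linarith

section

variable {𝕜 : Type*} [NontriviallyNormedField 𝕜] {f : 𝕜 → 𝕜} {z : 𝕜}

theorem dslope_zero_ne_zero (hf0 : f 0 = 0) (hf1 : deriv f 0 ≠ 0) (hfz : z ≠ 0 → f z ≠ 0) :
    dslope f 0 z ≠ 0 := by
  rcases eq_or_ne z 0 with rfl | hz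
  · rwa [dslope_same]
  · simpa [dslope_of_ne _ hz, slope_def_field, hf0, hz] using hfz hz

theorem sq_div_mul_deriv_eq_one_add (hf0 : f 0 = 0) (hf1 : deriv f 0 = 1) (hz : z ≠ 0)
    (hfz : f z ≠ 0) (hd : DifferentiableAt 𝕜 (dslope (dslope f 0) 0) z) :
    (z / f z) ^ 2 * deriv f z = 1 + z ^ 2 *
      ((deriv (dslope (dslope f 0) 0) z - dslope (dslope f 0) 0 z ^ 2) / dslope f 0 z ^ 2) := by
  have hF₁ : dslope f 0 z ≠ 0 := dslope_zero_ne_zero hf0 (by simp [hf1]) fun _ => hfz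
  have hf : f z = z * dslope f 0 z := by simpa [hf0] using (sub_smul_dslope f 0 z).symm
  have hF : dslope f 0 z = 1 + z * dslope (dslope f 0) 0 z := by
    rw [← sub_eq_iff_eq_add']
    simpa [hf1] using (sub_smul_dslope (dslope f 0) 0 z).symm
  rw [deriv_eq_dslope_add_sub_mul_deriv_dslope (a := 0) hd.of_dslope,
    deriv_eq_dslope_add_sub_mul_deriv_dslope (a := 0) hd, hf]
  field_simp
  rw [hF]
  ring

end

theorem exists_sq_div_mul_deriv_eq_one_add_sq_mul {f : ℂ → ℂ} {s : Set ℂ} (hs : IsOpen s)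
    (hs0 : 0 ∈ s) (hf : DifferentiableOn ℂ f s) (hf0 : f 0 = 0) (hf1 : deriv f 0 = 1)
    (hfne : ∀ z ∈ s, z ≠ 0 → f z ≠ 0) :
    ∃ h : ℂ → ℂ, DifferentiableOn ℂ h s ∧
      h 0 = deriv (dslope (dslope f 0) 0) 0 - dslope (dslope f 0) 0 0 ^ 2 ∧
      ∀ z ∈ s, z ≠ 0 → (z / f z) ^ 2 * deriv f z = 1 + z ^ 2 * h z := by
  have hF₁ := (Complex.differentiableOn_dslope (hs.mem_nhds hs0)).mpr hf
  have hF₂ := (Complex.differentiableOn_dslope (hs.mem_nhds hs0)).mpr hF₁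
  refine ⟨fun z => (deriv (dslope (dslope f 0) 0) z - dslope (dslope f 0) 0 z ^ 2) /
    dslope f 0 z ^ 2, ?_, by simp [hf1], fun z hz hz0 => ?_⟩
  · refine ((hF₂.deriv hs).sub (hF₂.pow 2)).div (hF₁.pow 2) fun z hz => ?_
    exact pow_ne_zero 2 (dslope_zero_ne_zero hf0 (by simp [hf1]) (hfne z hz))
  · exact sq_div_mul_deriv_eq_one_add hf0 hf1 hz0 (hfne z hz hz0)
      (hF₂.differentiableAt (hs.mem_nhds hz))

theorem stmt_10_general (lam : ℝ) (μ : ℂ) (f : ℂ → ℂ) (a : ℕ → ℂ)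
    (hμ : ‖1 - μ‖ < lam)
    (hdiff : DifferentiableOn ℂ f (ball (0:ℂ) 1))
    (ha0 : a 0 = 0) (ha1 : a 1 = 1)
    (hrep : ∀ z ∈ ball (0:ℂ) 1, HasSum (fun n : ℕ => a n * z ^ n) (f z))
    (hfne : ∀ z ∈ ball (0:ℂ) 1, z ≠ 0 → f z ≠ 0)
    (hU : ∀ z ∈ ball (0:ℂ) 1, z ≠ 0 → ‖(z / f z) ^ 2 * deriv f z - μ‖ < lam) :
    ‖(a 2) ^ 2 - a 3‖ ≤ lam * (1 - ‖1 - μ‖ ^ 2 / lam ^ 2) := by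
  have hp :=
    (hasFPowerSeriesOnBall_ofScalars_of_hasSum one_pos (by simpa using hrep)).hasFPowerSeriesAt
  have hcoeff (n : ℕ) : (swap dslope 0)^[n] f 0 = a n := by
    simpa using hp.iterate_dslope_apply_self n
  have hf0 : f 0 = 0 := by simpa [ha0] using hcoeff 0
  have hf1 : deriv f 0 = 1 := by simpa [ha1] using hcoeff 1
  have hF₂0 : dslope (dslope f 0) 0 0 = a 2 := hcoeff 2
  have hF₃0 : deriv (dslope (dslope f 0) 0) 0 = a 3 := by simpa using hcoeff 3
  obtain ⟨h, hh, hh0, hUh⟩ := exists_sq_div_mul_deriv_eq_one_add_sq_mul isOpen_ball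
    (mem_ball_self one_pos) hdiff hf0 hf1 hfne
  have hmaps : MapsTo (fun z => 1 + z ^ 2 * h z) (ball 0 1) (ball μ lam) := by
    intro z hz
    rcases eq_or_ne z 0 with rfl | hz0
    · simpa [dist_eq_norm] using hμ
    · simpa [dist_eq_norm, hUh z hz hz0] using hU z hz hz0
  have := norm_le_mul_one_sub_of_mapsTo_ball hh hmaps
  rwa [hh0, hF₂0, hF₃0, norm_sub_rev] at this

theorem stmt_10 (lam : ℝ) (μ : ℂ) (f : ℂ → ℂ) (a : ℕ → ℂ)
    (hlam : 0 < lam) (hμ : ‖1 - μ‖ < lam)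
    (hdiff : DifferentiableOn ℂ f (ball (0:ℂ) 1))
    (ha0 : a 0 = 0) (ha1 : a 1 = 1)
    (hrep : ∀ z ∈ ball (0:ℂ) 1, HasSum (fun n : ℕ => a n * z ^ n) (f z))
    (hfne : ∀ z ∈ ball (0:ℂ) 1, z ≠ 0 → f z ≠ 0)
    (hU : ∀ z ∈ ball (0:ℂ) 1, z ≠ 0 → ‖(z / f z) ^ 2 * deriv f z - μ‖ < lam) :
    ‖(a 2) ^ 2 - a 3‖ ≤ lam * (1 - ‖1 - μ‖ ^ 2 / lam ^ 2) :=
  stmt_10_general lam μ f a hμ hdiff ha0 ha1 hrep hfne hU
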